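/- Let G be a finite connected locally connected graph with diameter at least three, and let x, y be vertices with d(x,y) = diam(G). Define V1 = {u ≠ x : |[u]_x| ≥ 2 and [u]_x ⊆ N(x)} and V2 = {u ≠ x : |[u]_x| ≥ 2, [u]_x ⊄ N(x), and 2·d(x,u) ≤ diam(G)}. Then for every vertex u ≠ x and every v ∈ V1 ∪ V2, the lines line(x,u) and line(y,v) are different. -/

import Mathlib

/-!
Suppose `line x u = line y v`. Since `x ∈ line y v` and `d(x, y)` is the diameter, `v` lies on a
geodesic from `x` to `y`. The class of `v` supplies `w ≠ v` with `line x w = line x v`, and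
`u ∈ line x v = line x w` gives `w ∈ line x u = line y v`. As `w ∈ line x v`, one of `x, v, w`
lies between the other two.

If the middle one `a` of `x, a, b` is `v` or `w`, local connectivity yields a discrete
intermediate value argument: some neighbour `m` of `a` has `d(b, m) = d(b, a)`, and such an `m`
lies on exactly one of `line x a`, `line x b`.

If `x` is in the middle, `w ∈ line y v` makes `v, w` antipodal, and the neighbour of `v` one step
closer to `y` lies on `line x v` but not on `line x w`. This needs `d(x, w) ≥ 2`, which is where
`2 d(x, v) ≤ diam` enters.
-/

open SimpleGraph

/-- The line defined by two vertices `a` and `b` of a graph: `{a, b}` together with all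
vertices `c` lying on a shortest path through `a`, `b` and `c` (in some order). -/
def SimpleGraph.line {V : Type*} (G : SimpleGraph V) (a b : V) : Set V :=
  {a, b} ∪ {c | G.dist a b = G.dist a c + G.dist c b ∨
                G.dist a c = G.dist a b + G.dist b c ∨
                G.dist b c = G.dist b a + G.dist a c}

/-- The set of all lines of a graph. -/
def SimpleGraph.lineSet {V : Type*} (G : SimpleGraph V) : Set (Set V) :=
  {s | ∃ a b : V, a ≠ b ∧ s = G.line a b}

/-- A graph is locally connected if the subgraph induced on each neighborhood is connected. -/
def SimpleGraph.LocallyConnected {V : Type*} (G : SimpleGraph V) : Prop :=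
  ∀ v : V, (G.induce (G.neighborSet v)).Connected

/-- The class `[u]_z`: all vertices `w ≠ z` defining the same line with `z` as `u` does. -/
def SimpleGraph.lineClass {V : Type*} (G : SimpleGraph V) (z u : V) : Set V :=
  {w | w ≠ z ∧ G.line z w = G.line z u}

/-- The set `V₁` of vertices whose class w.r.t. `x` has at least two elements and is
contained in the neighborhood of `x`. -/
def SimpleGraph.V1 {V : Type*} (G : SimpleGraph V) (x : V) : Set V :=
  {u | u ≠ x ∧ 2 ≤ (G.lineClass x u).ncard ∧ G.lineClass x u ⊆ G.neighborSet x}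

/-- The set `V₂` of vertices whose class w.r.t. `x` has at least two elements, is not
contained in the neighborhood of `x`, and which are at distance at most half the diameter
from `x`. -/
noncomputable def SimpleGraph.V2 {V : Type*} (G : SimpleGraph V) (x : V) : Set V :=
  {u | u ≠ x ∧ 2 ≤ (G.lineClass x u).ncard ∧ ¬ G.lineClass x u ⊆ G.neighborSet x ∧
       2 * G.dist x u ≤ G.diam}

namespace SimpleGraph

variable {V : Type*} {G : SimpleGraph V}

lemma mem_line_iff {a b c : V} :
    c ∈ G.line a b ↔ c = a ∨ c = b ∨ G.dist a b = G.dist a c + G.dist c b ∨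
      G.dist a c = G.dist a b + G.dist b c ∨ G.dist b c = G.dist b a + G.dist a c := by
  simp [line, or_assoc]

lemma left_mem_line {a b : V} : a ∈ G.line a b := mem_line_iff.2 (.inl rfl)

lemma right_mem_line {a b : V} : b ∈ G.line a b := mem_line_iff.2 (.inr (.inl rfl))

lemma mem_line_of_dist_eq_add {a b c : V} (h : G.dist a c = G.dist a b + G.dist b c) :
    c ∈ G.line a b :=
  mem_line_iff.2 (.inr (.inr (.inr (.inl h))))

lemma mem_line_of_dist_add_dist_eq {a b c : V} (h : G.dist a c + G.dist c b = G.dist a b) :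
    c ∈ G.line a b :=
  mem_line_iff.2 (.inr (.inr (.inl h.symm)))

lemma mem_line_comm {z p q : V} : p ∈ G.line z q ↔ q ∈ G.line z p := by
  suffices ∀ p q : V, p ∈ G.line z q → q ∈ G.line z p from ⟨this p q, this q p⟩
  intro p q h
  have := G.dist_comm (u := p) (v := q)
  have := G.dist_comm (u := q) (v := z)
  have := G.dist_comm (u := z) (v := p)
  rw [mem_line_iff] at h ⊢
  rcases h with rfl | rfl | h | h | h
  · simp
  · simp
  all_goals omega

lemma Walk.exists_mem_support_eq {W : Type*} {H : SimpleGraph W} {f : W → ℕ}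
    (hf : ∀ ⦃p q⦄, H.Adj p q → f q ≤ f p + 1) {c : ℕ} :
    ∀ {a b : W} (P : H.Walk a b), f a ≤ c → c ≤ f b → ∃ m ∈ P.support, f m = c
  | _, _, .nil, ha, hb => ⟨_, Walk.start_mem_support _, le_antisymm ha hb⟩
  | a, _, .cons hadj P, ha, hb => by
    by_cases hfa : f a = c
    · exact ⟨a, Walk.start_mem_support _, hfa⟩
    · obtain ⟨m, hm, hfm⟩ := exists_mem_support_eq hf P (by have := hf hadj; omega) hb
      exact ⟨m, by simp [hm], hfm⟩

lemma LocallyConnected.exists_adj_dist_eq (hlc : G.LocallyConnected) {v z t s : V} {c : ℕ}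
    (ht : G.Adj v t) (hs : G.Adj v s) (htc : G.dist z t ≤ c) (hcs : c ≤ G.dist z s) :
    ∃ m, G.Adj v m ∧ G.dist z m = c := by
  obtain ⟨P⟩ := (hlc v).preconnected ⟨t, ht⟩ ⟨s, hs⟩
  have hf : ∀ ⦃p q : G.neighborSet v⦄, (G.induce (G.neighborSet v)).Adj p q →
      G.dist z q ≤ G.dist z p + 1 := fun p q hpq => by
    have hpq : G.Adj p q := by simpa using hpq
    rcases hpq.diff_dist_adj (u := z) with h | h | h <;> omega
  obtain ⟨m, -, hm⟩ := Walk.exists_mem_support_eq hf P htc hcs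
  exact ⟨m, m.2, hm⟩

lemma Reachable.exists_adj_dist_add_one_eq {p q : V} (hr : G.Reachable p q) (hpq : p ≠ q) :
    ∃ t, G.Adj p t ∧ G.dist t q + 1 = G.dist p q := by
  obtain ⟨P, hP⟩ := hr.exists_walk_length_eq_dist
  cases P with
  | nil => exact absurd rfl hpq
  | @cons _ t _ hadj P =>
    refine ⟨t, hadj, le_antisymm ?_ ?_⟩
    · simpa [← hP] using dist_le P
    · have := (Walk.reachable P).dist_triangle_right p
      rw [dist_eq_one_iff_adj.2 hadj] at this
      omega

lemma exists_line_eq_of_mem_V1_union_V2 {x v : V} (hdiam : 2 ≤ G.diam)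
    (hv : v ∈ G.V1 x ∪ G.V2 x) :
    v ≠ x ∧ 2 * G.dist x v ≤ G.diam ∧ ∃ w, w ≠ x ∧ w ≠ v ∧ G.line x w = G.line x v := by
  have ⟨hvx, hcard, hdist⟩ : v ≠ x ∧ 2 ≤ (G.lineClass x v).ncard ∧ 2 * G.dist x v ≤ G.diam := by
    rcases hv with hv | hv
    · have hxv : G.Adj x v := hv.2.2 ⟨hv.1, rfl⟩
      exact ⟨hv.1, hv.2.1, by rw [dist_eq_one_iff_adj.2 hxv]; omega⟩
    · exact ⟨hv.1, hv.2.1, hv.2.2.2⟩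
  obtain ⟨w, ⟨hwx, hw⟩, hwv⟩ := Set.exists_ne_of_one_lt_ncard hcard v
  exact ⟨hvx, hdist, w, hwx, hwv, hw⟩

variable (hG : G.Connected)
include hG

lemma mem_line_iff_dist_ne_of_adj {x b m : V} (hm : G.Adj b m) :
    m ∈ G.line x b ↔ G.dist x m ≠ G.dist x b := by
  have := G.dist_comm (u := m) (v := b)
  have := G.dist_comm (u := b) (v := x)
  have := dist_eq_one_iff_adj.2 hm
  have := hG.dist_triangle (u := x) (v := b) (w := m)
  have := hG.dist_triangle (u := x) (v := m) (w := b)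
  refine ⟨fun h => ?_, fun h => ?_⟩
  · rcases mem_line_iff.1 h with rfl | rfl | h | h | h
    · simp only [dist_self]
      omega
    · exact (hm.ne rfl).elim
    all_goals omega
  · rcases Nat.lt_or_gt_of_ne h with h | h
    · exact mem_line_of_dist_add_dist_eq (by omega)
    · exact mem_line_of_dist_eq_add (by omega)

lemma dist_add_dist_eq_of_mem_line {a b z : V} (hmax : ∀ c c', G.dist c c' ≤ G.dist a z)
    (hz : z ∈ G.line a b) : G.dist a b + G.dist b z = G.dist a z := by
  have := hmax a b
  have := hmax b z
  rcases mem_line_iff.1 hz with rfl | rfl | h | h | h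
  · simp only [dist_self, nonpos_iff_eq_zero] at *
    omega
  · simp
  · rw [hG.dist_eq_zero_iff.1 (by omega : G.dist z b = 0)]
    simp
  · omega
  · rw [hG.dist_eq_zero_iff.1 (by omega : G.dist b a = 0)]
    simp

lemma line_ne_line_of_dist_eq_add (hlc : G.LocallyConnected) {x a b : V} (hax : a ≠ x)
    (hab : a ≠ b) (h : G.dist x b = G.dist x a + G.dist a b) : G.line x a ≠ G.line x b := by
  intro hline
  obtain ⟨t, hat, ht⟩ := (hG.preconnected a x).exists_adj_dist_add_one_eq hax
  obtain ⟨s, has, hs⟩ := (hG.preconnected a b).exists_adj_dist_add_one_eq hab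
  have := G.dist_comm (u := t) (v := x)
  have := G.dist_comm (u := s) (v := b)
  have := G.dist_comm (u := t) (v := b)
  have := G.dist_comm (u := a) (v := x)
  have := hG.dist_triangle (u := x) (v := t) (w := b)
  obtain ⟨m, ham, hm⟩ := hlc.exists_adj_dist_eq (z := b) (c := G.dist a b) has hat
    (by omega) (by omega)
  have hma : m ∈ G.line x a ↔ G.dist x m ≠ G.dist x a := mem_line_iff_dist_ne_of_adj hG ham
  have hmb : m ∈ G.line x b ↔ G.dist x m = G.dist x a := by
    have := G.dist_comm (u := m) (v := b)
    have := G.dist_comm (u := b) (v := x)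
    have := dist_eq_one_iff_adj.2 ham
    have := hG.dist_triangle (u := x) (v := a) (w := m)
    refine ⟨fun h' => ?_, fun h' => mem_line_of_dist_add_dist_eq (by omega)⟩
    rcases mem_line_iff.1 h' with rfl | rfl | h' | h' | h'
    · simp only [dist_self] at *
      omega
    · simp only [dist_self] at *
      omega
    all_goals omega
  rw [hline] at hma
  exact not_iff_self (hma.symm.trans hmb)

lemma line_ne_line_of_antipodal {x v w s : V} (hvx : v ≠ x)
    (hecc : ∀ c, G.dist w c ≤ G.dist w v) (h : G.dist v w = G.dist v x + G.dist x w)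
    (hxw : 2 ≤ G.dist x w) (hs : G.Adj v s) (hxs : G.dist x s = G.dist x v + 1) :
    G.line x v ≠ G.line x w := by
  intro hline
  have hvs := dist_eq_one_iff_adj.2 hs
  have hsv : s ∈ G.line x w := hline ▸ mem_line_of_dist_eq_add (by omega)
  have := hG.pos_dist_of_ne hvx
  have := hecc s
  have := hG.dist_triangle (u := v) (v := s) (w := w)
  have := G.dist_comm (u := s) (v := w)
  have := G.dist_comm (u := w) (v := x)
  have := G.dist_comm (u := v) (v := x)
  have := G.dist_comm (u := v) (v := w)
  rcases mem_line_iff.1 hsv with rfl | rfl | h' | h' | h'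
  · simp only [dist_self] at hxs
    omega
  all_goals omega

lemma line_ne_line_of_dist_eq_add_of_mem_line {x y v w : V}
    (hmax : ∀ c c', G.dist c c' ≤ G.dist x y) (hvx : v ≠ x) (hwx : w ≠ x)
    (hxv : G.dist x v + 2 ≤ G.dist x y) (hv : G.dist x v + G.dist v y = G.dist x y)
    (hw : G.dist x w + G.dist w y = G.dist x y) (h : G.dist v w = G.dist v x + G.dist x w)
    (hwyv : w ∈ G.line y v) : G.line x v ≠ G.line x w := by
  have := hG.pos_dist_of_ne hvx.symm
  have := hG.pos_dist_of_ne hwx.symm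
  have := G.dist_comm (u := x) (v := v)
  have := G.dist_comm (u := v) (v := y)
  have := G.dist_comm (u := v) (v := w)
  have := G.dist_comm (u := y) (v := w)
  have hvw : G.dist x v + G.dist x w = G.dist x y := by
    rcases mem_line_iff.1 hwyv with rfl | rfl | h' | h' | h'
    · simp only [dist_self] at *
      omega
    · simp only [dist_self] at *
      omega
    all_goals omega
  obtain ⟨s, hvs, hs⟩ := (hG.preconnected v y).exists_adj_dist_add_one_eq (by rintro rfl; omega)
  have := dist_eq_one_iff_adj.2 hvs
  have := hG.dist_triangle (u := x) (v := s) (w := y)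
  have := hG.dist_triangle (u := x) (v := v) (w := s)
  refine line_ne_line_of_antipodal hG hvx (fun c => ?_) h (by omega) hvs (by omega)
  have := hmax w c
  omega

end SimpleGraph

theorem lines_from_x_and_y_disjoint_general {V : Type*} (G : SimpleGraph V)
    (hG : G.Connected) (hlc : G.LocallyConnected) (hdiam : 3 ≤ G.diam)
    {x y : V} (hxy : G.dist x y = G.diam) :
    ∀ u : V, u ≠ x → ∀ v ∈ G.V1 x ∪ G.V2 x, G.line x u ≠ G.line y v := by
  intro u _ v hv hline
  have hmax : ∀ a b, G.dist a b ≤ G.dist x y := fun a b =>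
    hxy ▸ dist_le_diam (ediam_ne_top_of_diam_ne_zero (by omega))
  obtain ⟨hvx, hvD, w, hwx, hwv, hxwv⟩ := exists_line_eq_of_mem_V1_union_V2 (by omega) hv
  have := G.dist_comm (u := x) (v := y)
  have := G.dist_comm (u := x) (v := v)
  have := G.dist_comm (u := v) (v := y)
  have hv_geo : G.dist y v + G.dist v x = G.dist y x :=
    dist_add_dist_eq_of_mem_line hG (fun a b => G.dist_comm (u := x) ▸ hmax a b)
      (hline ▸ left_mem_line)
  have hw_geo : G.dist x w + G.dist w y = G.dist x y :=
    dist_add_dist_eq_of_mem_line hG hmax (hxwv ▸ mem_line_of_dist_eq_add (by omega))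
  have hwyv : w ∈ G.line y v :=
    hline ▸ mem_line_comm.1 (hxwv ▸ mem_line_comm.1 (hline ▸ right_mem_line))
  rcases mem_line_iff.1 (hxwv ▸ right_mem_line : w ∈ G.line x v) with rfl | rfl | h | h | h
  · exact hwx rfl
  · exact hwv rfl
  · exact line_ne_line_of_dist_eq_add hG hlc hwx hwv h hxwv
  · exact line_ne_line_of_dist_eq_add hG hlc hvx hwv.symm h hxwv.symm
  · exact line_ne_line_of_dist_eq_add_of_mem_line hG hmax hvx hwx (by omega) (by omega) hw_geo h
      hwyv hxwv.symm

theorem lines_from_x_and_y_disjoint {V : Type*} [Fintype V] (G : SimpleGraph V)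
    (hG : G.Connected) (hlc : G.LocallyConnected) (hdiam : 3 ≤ G.diam)
    {x y : V} (hxy : G.dist x y = G.diam) :
    ∀ u : V, u ≠ x → ∀ v ∈ G.V1 x ∪ G.V2 x, G.line x u ≠ G.line y v :=
  lines_from_x_and_y_disjoint_general G hG hlc hdiam hxy
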